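/- arXiv:2203.04010 — 6 statements merged into one kernel-verified Lean document; each statement's English description precedes it below -/
import Mathlib

section
/- Let Q₂ be a quadratic form on ℝ^{2×2}_sym that is nonnegative (Q₂(B) ≥ 0 for all B). Then for every U ∈ ℝ^{2×2}_sym, the function (A, M) ↦ ∫_{−1/2}^{1/2} Q₂( t·A + M + 𝟙(t>0)·(1/2)U ) dt on ℝ^{2×2}_sym × ℝ^{2×2}_sym attains its minimum at (A, M) = (−(3/4)U, −(1/4)U), and the minimum value equals (1/64)·Q₂(U); in particular this minimum equals (3/16) times the value (1/12)·Q₂(U), i.e. E_res(U) = (3/16)·Q_el(U) in the homogeneous case. -/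
open MeasureTheory Matrix Filter Topology

noncomputable section

/-- 2×2 real matrices. -/
abbrev M2 : Type := Matrix (Fin 2) (Fin 2) ℝ
/-- 3×3 real matrices. -/
abbrev M3 : Type := Matrix (Fin 3) (Fin 3) ℝ

/-- squared Frobenius norm of a 2×2 matrix -/
def frobSq2 (A : M2) : ℝ := ∑ i, ∑ j, (A i j) ^ 2

/-- squared Frobenius norm of a 3×3 matrix -/
def frobSq3 (A : M3) : ℝ := ∑ i, ∑ j, (A i j) ^ 2

/-- symmetric part of a matrix: `sym G = (G + Gᵀ)/2` -/
def symPart (G : M3) : M3 := (1 / 2 : ℝ) • (G + Gᵀ)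

/-- `ι A` : the 3×3 matrix with upper-left 2×2 block `A` and zeros elsewhere -/
def iota (A : M2) : M3 :=
  Matrix.of fun i j =>
    if hi : (i : ℕ) < 2 then (if hj : (j : ℕ) < 2 then A ⟨i, hi⟩ ⟨j, hj⟩ else 0) else 0

/-- `d ⊗ e₃` : the 3×3 matrix whose third column is `d` and whose other entries vanish -/
def tensorE3 (d : Fin 3 → ℝ) : M3 :=
  Matrix.of fun i j => if j = (2 : Fin 3) then d i else 0

/-- the symmetric 2×2 real matrices, as a submodule of `M2` -/
def Sym2M : Submodule ℝ M2 where
  carrier := {A : M2 | A.IsSymm}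
  add_mem' := fun ha hb => Matrix.IsSymm.add ha hb
  zero_mem' := Matrix.isSymm_zero
  smul_mem' := fun c _ ha => Matrix.IsSymm.smul ha c

lemma polyInt (α β γ a b : ℝ) :
    ∫ x in a..b, (α*x^2+β*x+γ) = α*(b^3-a^3)/3 + β*(b^2-a^2)/2 + γ*(b-a) := by
  have h1 : IntervalIntegrable (fun x : ℝ => α*x^2+β*x) volume a b :=
    (by continuity : Continuous fun x : ℝ => α*x^2+β*x).intervalIntegrable a b
  have h2 : IntervalIntegrable (fun x : ℝ => α*x^2) volume a b :=
    (by continuity : Continuous fun x : ℝ => α*x^2).intervalIntegrable a b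
  have h3 : IntervalIntegrable (fun x : ℝ => β*x) volume a b :=
    (by continuity : Continuous fun x : ℝ => β*x).intervalIntegrable a b
  rw [intervalIntegral.integral_add h1 (intervalIntegrable_const),
      intervalIntegral.integral_add h2 h3,
      intervalIntegral.integral_const_mul, intervalIntegral.integral_const_mul,
      integral_pow, integral_id, intervalIntegral.integral_const]
  simp [smul_eq_mul]; ring

lemma polyIntIoo (α β γ : ℝ) (a b : ℝ) (hab : a ≤ b) :
    ∫ x in Set.Ioo a b, (α*x^2+β*x+γ) = α*(b^3-a^3)/3 + β*(b^2-a^2)/2 + γ*(b-a) := by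
  rw [← integral_Ioc_eq_integral_Ioo, ← intervalIntegral.integral_of_le hab, polyInt]

lemma keyInt (α β γ δ ε : ℝ) :
    ∫ t in Set.Ioo (-(1:ℝ)/2) (1/2),
      (α*t^2+β*t+γ + (if 0 < t then (1:ℝ) else 0)*(δ*t+ε))
      = α/12 + γ + δ/8 + ε/2 := by
  have hind : ∀ t : ℝ, (if 0 < t then (1:ℝ) else 0)*(δ*t+ε)
      = Set.indicator (Set.Ioi (0:ℝ)) (fun t => δ*t+ε) t := by
    intro t
    rw [Set.indicator_apply]
    simp [Set.mem_Ioi]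
  have h1 : IntegrableOn (fun t : ℝ => α*t^2+β*t+γ) (Set.Ioo (-(1:ℝ)/2) (1/2)) volume :=
    (intervalIntegrable_iff_integrableOn_Ioo_of_le (by norm_num)).mp
      ((by continuity : Continuous fun t : ℝ => α*t^2+β*t+γ).intervalIntegrable _ _)
  have h2 : IntegrableOn (fun t : ℝ => Set.indicator (Set.Ioi (0:ℝ)) (fun t => δ*t+ε) t)
      (Set.Ioo (-(1:ℝ)/2) (1/2)) volume :=
    ((intervalIntegrable_iff_integrableOn_Ioo_of_le (by norm_num)).mp
      ((by continuity : Continuous fun t : ℝ => δ*t+ε).intervalIntegrable _ _)).indicator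
      measurableSet_Ioi
  simp only [hind]
  rw [integral_add h1 h2, setIntegral_indicator measurableSet_Ioi]
  have hset : Set.Ioo (-(1:ℝ)/2) (1/2) ∩ Set.Ioi 0 = Set.Ioo (0:ℝ) (1/2) := by
    ext x
    simp only [Set.mem_inter_iff, Set.mem_Ioo, Set.mem_Ioi]
    constructor
    · rintro ⟨⟨_, h2⟩, h3⟩; exact ⟨h3, h2⟩
    · rintro ⟨h1, h2⟩; exact ⟨⟨by linarith, h2⟩, h1⟩
  rw [hset]
  have e1 := polyIntIoo α β γ (-(1:ℝ)/2) (1/2) (by norm_num)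
  have e2 : ∫ x in Set.Ioo (0:ℝ) (1/2), (δ*x+ε) = δ/8 + ε/2 := by
    have := polyIntIoo 0 δ ε (0:ℝ) (1/2) (by norm_num)
    rw [show (fun x : ℝ => δ*x+ε) = fun x : ℝ => 0*x^2+δ*x+ε from by funext x; ring, this]
    ring
  rw [e1, e2]; ring


/-- for a nonnegative quadratic form `Q₂` on the symmetric 2×2 matrices,
the function `(A,M) ↦ ∫_{−1/2}^{1/2} Q₂(t·A + M + 𝟙(t>0)·(1/2)U) dt` attains its minimum
at `(A,M) = (−(3/4)U, −(1/4)U)`, with minimum value `(1/64)·Q₂(U) = (3/16)·((1/12)·Q₂(U))`. -/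
theorem statement3 (Q2 : Sym2M → ℝ)
    (hquad : ∃ b : Sym2M →ₗ[ℝ] Sym2M →ₗ[ℝ] ℝ, (∀ u v, b u v = b v u) ∧ ∀ v, Q2 v = b v v)
    (hnonneg : ∀ B : Sym2M, 0 ≤ Q2 B) (U : Sym2M) :
    let F : Sym2M × Sym2M → ℝ := fun p =>
      ∫ t in Set.Ioo (-(1 : ℝ) / 2) (1 / 2),
        Q2 (t • p.1 + p.2 + (if 0 < t then (1 : ℝ) else 0) • ((1 / 2 : ℝ) • U))
    (∀ p : Sym2M × Sym2M, F (-((3 : ℝ) / 4) • U, -((1 : ℝ) / 4) • U) ≤ F p) ∧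
      F (-((3 : ℝ) / 4) • U, -((1 : ℝ) / 4) • U) = (1 / 64) * Q2 U ∧
      F (-((3 : ℝ) / 4) • U, -((1 : ℝ) / 4) • U) = (3 / 16) * ((1 / 12) * Q2 U) := by
  obtain ⟨b, hsymm, hQ⟩ := hquad
  intro F
  have hF : ∀ p : Sym2M × Sym2M,
      F p = b p.1 p.1/12 + b p.2 p.2 + b p.1 U/8 + (b p.2 U + b U U/4)/2 := by
    intro p
    have hpt : ∀ t : ℝ,
        Q2 (t • p.1 + p.2 + (if 0 < t then (1:ℝ) else 0) • ((1/2:ℝ) • U))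
          = (b p.1 p.1)*t^2 + (2*b p.1 p.2)*t + b p.2 p.2
            + (if 0 < t then (1:ℝ) else 0)*((b p.1 U)*t + (b p.2 U + b U U/4)) := by
      intro t
      rw [hQ]
      by_cases h : 0 < t <;>
        simp only [h, if_true, if_false, one_smul, zero_smul, add_zero, map_add, _root_.map_smul,
          LinearMap.add_apply, LinearMap.smul_apply, smul_eq_mul,
          hsymm p.2 p.1, hsymm U p.1, hsymm U p.2] <;>
        ring
    have h1 : F p = ∫ t in Set.Ioo (-(1:ℝ)/2) (1/2),
        ((b p.1 p.1)*t^2 + (2*b p.1 p.2)*t + b p.2 p.2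
          + (if 0 < t then (1:ℝ) else 0)*((b p.1 U)*t + (b p.2 U + b U U/4))) :=
      integral_congr_ae (Filter.Eventually.of_forall fun t => hpt t)
    rw [h1, keyInt]
  have hmin : F (-((3:ℝ)/4) • U, -((1:ℝ)/4) • U) = (1/64) * Q2 U := by
    rw [hF, hQ U]
    simp only [_root_.map_smul, LinearMap.smul_apply, smul_eq_mul]
    ring
  refine ⟨?_, hmin, by rw [hmin]; ring⟩
  intro p
  have hexp : F p = F (-((3:ℝ)/4) • U, -((1:ℝ)/4) • U)
      + Q2 (p.1 + ((3:ℝ)/4) • U) / 12 + Q2 (p.2 + ((1:ℝ)/4) • U) := by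
    rw [hF, hF, hQ (p.1 + ((3:ℝ)/4) • U), hQ (p.2 + ((1:ℝ)/4) • U)]
    simp only [map_add, _root_.map_smul, map_neg, LinearMap.add_apply, LinearMap.smul_apply,
      LinearMap.neg_apply, smul_eq_mul, hsymm U p.1, hsymm U p.2]
    ring
  have h1 := hnonneg (p.1 + ((3:ℝ)/4) • U)
  have h2 := hnonneg (p.2 + ((1:ℝ)/4) • U)
  linarith
end
end

section
/- Let Q₂ be a quadratic form on ℝ^{2×2}_sym that is positive definite (Q₂(B) > 0 for all B ≠ 0). Then for every U ∈ ℝ^{2×2}_sym, the function (A, M) ↦ ∫_{−1/2}^{1/2} Q₂( 𝟙(t>0)·(1/2)U − (t·A + M) ) dt on ℝ^{2×2}_sym × ℝ^{2×2}_sym has exactly one minimizer, namely (A, M) = ((3/4)U, (1/4)U). (In particular, in the homogeneous case the coupling map 𝔹 of the bending model satisfies 𝔹(U) = (3/4)U.) -/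
open MeasureTheory Matrix Filter Topology

noncomputable section

/-!
Write `Q v = b v v`. On each half of the interval the integrand is a quadratic
polynomial in `t`, so the integral is computed in closed form; completing the squares gives
`F (A, M) = Q U / 64 + Q (A - (3/4) U) / 12 + Q (M - (1/4) U)`, whose unique minimizer is
read off from the positive definiteness of `Q`.
-/

lemma setIntegral_Ioo_ite_pos {f g : ℝ → ℝ} {a b : ℝ} (ha : a ≤ 0) (hb : 0 ≤ b)
    (hf : Continuous f) (hg : Continuous g) :
    ∫ t in Set.Ioo a b, (if 0 < t then f t else g t) = (∫ t in a..0, g t) + ∫ t in 0..b, f t := by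
  rw [← integral_Ioc_eq_integral_Ioo, ← Set.Ioc_union_Ioc_eq_Ioc ha hb,
    setIntegral_union (Set.Ioc_disjoint_Ioc_of_le le_rfl) measurableSet_Ioc,
    intervalIntegral.integral_of_le ha, intervalIntegral.integral_of_le hb]
  · congr 1
    · exact setIntegral_congr_fun measurableSet_Ioc fun t ht => if_neg ht.2.not_gt
    · exact setIntegral_congr_fun measurableSet_Ioc fun t ht => if_pos ht.1
  · exact (hg.integrableOn_Ioc).congr_fun (fun t ht => (if_neg ht.2.not_gt).symm) measurableSet_Ioc
  · exact (hf.integrableOn_Ioc).congr_fun (fun t ht => (if_pos ht.1).symm) measurableSet_Ioc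

lemma integral_quadratic (α β γ a b : ℝ) :
    ∫ t in a..b, (α * t ^ 2 + β * t + γ) =
      α * (b ^ 3 - a ^ 3) / 3 + β * (b ^ 2 - a ^ 2) / 2 + γ * (b - a) := by
  have hint (f : ℝ → ℝ) (hf : Continuous f) : IntervalIntegrable f volume a b :=
    hf.intervalIntegrable a b
  rw [intervalIntegral.integral_add (hint _ (by fun_prop)) (hint _ (by fun_prop)),
    intervalIntegral.integral_add (hint _ (by fun_prop)) (hint _ (by fun_prop)),
    intervalIntegral.integral_const_mul, intervalIntegral.integral_const_mul, integral_pow,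
    integral_id, intervalIntegral.integral_const, smul_eq_mul]
  ring

section BilinForm

variable {V : Type*} [AddCommGroup V] [Module ℝ V] (b : LinearMap.BilinForm ℝ V)

lemma bilinForm_sub_smul_self (hb : ∀ u v, b u v = b v u) (w y : V) (t : ℝ) :
    b (w - t • y) (w - t • y) = b y y * t ^ 2 + (-2 * b w y) * t + b w w := by
  simp only [map_sub, map_smul, LinearMap.sub_apply, LinearMap.smul_apply, smul_eq_mul, hb y w]
  ring

lemma integral_bilinForm_step_sub_affine (hb : ∀ u v, b u v = b v u) (U A M : V) :
    ∫ t in Set.Ioo (-(1 : ℝ) / 2) (1 / 2),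
        b ((if 0 < t then (1 : ℝ) else 0) • ((1 / 2 : ℝ) • U) - (t • A + M))
          ((if 0 < t then (1 : ℝ) else 0) • ((1 / 2 : ℝ) • U) - (t • A + M)) =
      b U U / 64 + b (A - (3 / 4 : ℝ) • U) (A - (3 / 4 : ℝ) • U) / 12 +
        b (M - (1 / 4 : ℝ) • U) (M - (1 / 4 : ℝ) • U) := by
  have hsplit : ∀ t : ℝ,
      b ((if 0 < t then (1 : ℝ) else 0) • ((1 / 2 : ℝ) • U) - (t • A + M))
          ((if 0 < t then (1 : ℝ) else 0) • ((1 / 2 : ℝ) • U) - (t • A + M)) =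
        if 0 < t then b ((1 / 2 : ℝ) • U - M - t • A) ((1 / 2 : ℝ) • U - M - t • A)
        else b (-M - t • A) (-M - t • A) := by
    intro t
    split_ifs
    · rw [one_smul, sub_add_eq_sub_sub_swap]
    · rw [zero_smul, zero_sub, neg_add', sub_eq_add_neg, sub_eq_add_neg, add_comm]
  simp_rw [hsplit, bilinForm_sub_smul_self b hb]
  rw [setIntegral_Ioo_ite_pos (by norm_num) (by norm_num) (by fun_prop) (by fun_prop),
    integral_quadratic, integral_quadratic]
  simp only [map_sub, map_neg, map_smul, LinearMap.sub_apply, LinearMap.neg_apply,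
    LinearMap.smul_apply, smul_eq_mul, hb M U, hb A U]
  ring

end BilinForm

/-- for a positive definite quadratic form `Q₂` on the symmetric 2×2 matrices,
the function `(A,M) ↦ ∫_{−1/2}^{1/2} Q₂(𝟙(t>0)·(1/2)U − (t·A + M)) dt` has exactly one
minimizer, namely `(A,M) = ((3/4)U, (1/4)U)`. -/
theorem statement4 (Q2 : Sym2M → ℝ)
    (hquad : ∃ b : Sym2M →ₗ[ℝ] Sym2M →ₗ[ℝ] ℝ, (∀ u v, b u v = b v u) ∧ ∀ v, Q2 v = b v v)
    (hpos : ∀ B : Sym2M, B ≠ 0 → 0 < Q2 B) (U : Sym2M) :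
    let F : Sym2M × Sym2M → ℝ := fun p =>
      ∫ t in Set.Ioo (-(1 : ℝ) / 2) (1 / 2),
        Q2 ((if 0 < t then (1 : ℝ) else 0) • ((1 / 2 : ℝ) • U) - (t • p.1 + p.2))
    (∀ p : Sym2M × Sym2M, F (((3 : ℝ) / 4) • U, ((1 : ℝ) / 4) • U) ≤ F p) ∧
      ∀ p : Sym2M × Sym2M, (∀ q : Sym2M × Sym2M, F p ≤ F q) →
        p = (((3 : ℝ) / 4) • U, ((1 : ℝ) / 4) • U) := by
  obtain ⟨b, hb, hQ⟩ := hquad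
  intro F
  have hF : ∀ p : Sym2M × Sym2M, F p = Q2 U / 64 + Q2 (p.1 - ((3 : ℝ) / 4) • U) / 12 +
      Q2 (p.2 - ((1 : ℝ) / 4) • U) := by
    intro p
    simp only [F, hQ]
    exact integral_bilinForm_step_sub_affine b hb U p.1 p.2
  have hQ0 : Q2 0 = 0 := by simp [hQ]
  have hnonneg : ∀ v, 0 ≤ Q2 v := fun v => by
    rcases eq_or_ne v 0 with rfl | hv
    exacts [hQ0.ge, (hpos v hv).le]
  refine ⟨fun p => ?_, fun p hmin => ?_⟩
  · rw [hF, hF, sub_self, sub_self, hQ0]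
    linarith [hnonneg (p.1 - ((3 : ℝ) / 4) • U), hnonneg (p.2 - ((1 : ℝ) / 4) • U)]
  · have hle := hmin (((3 : ℝ) / 4) • U, ((1 : ℝ) / 4) • U)
    rw [hF, hF, sub_self, sub_self, hQ0] at hle
    have hzero : ∀ v, Q2 v ≤ 0 → v = 0 := fun v hv =>
      not_not.1 fun hne => (hpos v hne).not_ge hv
    have h₁ := hnonneg (p.1 - ((3 : ℝ) / 4) • U)
    have h₂ := hnonneg (p.2 - ((1 : ℝ) / 4) • U)
    ext1 <;> exact sub_eq_zero.1 (hzero _ (by linarith))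
end
end

section
/- Let λ, μ ∈ ℝ with μ > 0 and 2μ + 3λ > 0, let Q(G) := (λ/2)(tr G)² + μ|sym G|² on 3×3 real matrices, and define Q₂(B) := inf_{d∈ℝ³} Q(ι(B) + sym(d⊗e₃)) for B ∈ ℝ^{2×2}_sym. Then for every A ∈ ℝ^{2×2}_sym, the infimum over M ∈ ℝ^{2×2}_sym of ∫_{−1/2}^{1/2} Q₂(t·A + M) dt is attained and equals (1/12)·( (μλ/(λ+2μ))(tr A)² + μ|A|² ). (Isotropic representation of the bending stiffness Q_el.) -/
open MeasureTheory Matrix Filter Topology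

noncomputable section

/-!
For symmetric `B` the energy of `ι(B) + sym(d ⊗ e₃)` is
`(λ/2)(tr B + d₃)² + μ(|B|² + (d₁² + d₂²)/2 + d₃²)`, which is minimal at
`d = (0, 0, -λ tr B/(λ+2μ))`, so `Q₂(B) = (μλ/(λ+2μ))(tr B)² + μ|B|²`. This form is quadratic in
`B`, so `t ↦ Q₂(tA + M)` is a quadratic polynomial in `t`; integrating over `(-1/2, 1/2)` kills
the linear term and gives `Q₂(A)/12 + Q₂(M)`. Finally `Q₂ ≥ 0` since `(tr M)² ≤ 2|M|²` and
`μλ/(λ+2μ) + μ/2 ≥ 0` when `2μ + 3λ > 0`, so the minimum is attained at `M = 0`.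
-/

def reducedForm (lam mu : ℝ) (B : M2) : ℝ :=
  mu * lam / (lam + 2 * mu) * B.trace ^ 2 + mu * frobSq2 B

@[simp]
lemma reducedForm_zero (lam mu : ℝ) : reducedForm lam mu 0 = 0 := by
  simp [reducedForm, frobSq2]

lemma trace_iota_add_symPart_tensorE3 (B : M2) (d : Fin 3 → ℝ) :
    (iota B + symPart (tensorE3 d)).trace = B.trace + d 2 := by
  simp [Matrix.trace, iota, symPart, tensorE3, Fin.sum_univ_succ]
  ring

lemma frobSq3_symPart_iota_add_symPart_tensorE3 {B : M2} (hB : B.IsSymm) (d : Fin 3 → ℝ) :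
    frobSq3 (symPart (iota B + symPart (tensorE3 d))) =
      frobSq2 B + (d 0 ^ 2 + d 1 ^ 2) / 2 + d 2 ^ 2 := by
  have h10 : B 1 0 = B 0 1 := hB.apply 0 1
  simp [frobSq3, frobSq2, iota, symPart, tensorE3, Fin.sum_univ_succ, h10]
  ring

/-- The minimum is attained at `x = -λt/(λ+2μ)`. -/
lemma isLeast_range_normalStrain {lam mu : ℝ} (h : 0 < lam + 2 * mu) (t : ℝ) :
    IsLeast (Set.range fun x : ℝ => lam / 2 * (t + x) ^ 2 + mu * x ^ 2)
      (mu * lam / (lam + 2 * mu) * t ^ 2) := by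
  refine ⟨⟨-lam * t / (lam + 2 * mu), ?_⟩, ?_⟩
  · field_simp
    ring
  · rintro _ ⟨x, rfl⟩
    rw [div_mul_eq_mul_div, div_le_iff₀ h]
    -- the gap, times `λ + 2μ`, is `(λt + (λ+2μ)x)² / 2`
    nlinarith [sq_nonneg (lam * t + (lam + 2 * mu) * x)]

lemma isLeast_range_energy_iota_add_symPart_tensorE3 {lam mu : ℝ} (hmu : 0 ≤ mu)
    (h : 0 < lam + 2 * mu) {B : M2} (hB : B.IsSymm) :
    IsLeast (Set.range fun d : Fin 3 → ℝ =>
        lam / 2 * (iota B + symPart (tensorE3 d)).trace ^ 2 +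
          mu * frobSq3 (symPart (iota B + symPart (tensorE3 d))))
      (reducedForm lam mu B) := by
  simp only [trace_iota_add_symPart_tensorE3, frobSq3_symPart_iota_add_symPart_tensorE3 hB]
  obtain ⟨⟨x, hx⟩, hlow⟩ := isLeast_range_normalStrain h B.trace
  refine ⟨⟨![0, 0, x], ?_⟩, ?_⟩
  · change lam / 2 * (B.trace + x) ^ 2 + mu * (frobSq2 B + (0 ^ 2 + 0 ^ 2) / 2 + x ^ 2) = _
    rw [reducedForm, ← hx]
    ring
  · rintro _ ⟨d, rfl⟩
    have := hlow ⟨d 2, rfl⟩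
    simp only [reducedForm]
    nlinarith [sq_nonneg (d 0), sq_nonneg (d 1)]

lemma trace_sq_le_two_mul_frobSq2 (M : M2) : M.trace ^ 2 ≤ 2 * frobSq2 M := by
  simp only [Matrix.trace, frobSq2, Fin.sum_univ_two, Matrix.diag]
  nlinarith [sq_nonneg (M 0 0 - M 1 1), sq_nonneg (M 0 1), sq_nonneg (M 1 0)]

lemma reducedForm_nonneg {lam mu : ℝ} (hmu : 0 ≤ mu) (hbulk : 0 < 2 * mu + 3 * lam) (M : M2) :
    0 ≤ reducedForm lam mu M := by
  have h : 0 < lam + 2 * mu := by linarith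
  have hcoef : mu * lam / (lam + 2 * mu) + mu / 2 =
      mu * (2 * mu + 3 * lam) / (2 * (lam + 2 * mu)) := by
    rw [div_add_div _ _ h.ne' two_ne_zero]
    ring
  have hcoef_nonneg : 0 ≤ mu * lam / (lam + 2 * mu) + mu / 2 := by
    rw [hcoef]
    positivity
  have := trace_sq_le_two_mul_frobSq2 M
  calc (0 : ℝ) ≤ (mu * lam / (lam + 2 * mu) + mu / 2) * M.trace ^ 2 +
        mu * (frobSq2 M - M.trace ^ 2 / 2) := by
        have : 0 ≤ frobSq2 M - M.trace ^ 2 / 2 := by linarith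
        positivity
    _ = reducedForm lam mu M := by
        rw [reducedForm]
        ring

lemma frobSq2_smul_add (t : ℝ) (A M : M2) :
    frobSq2 (t • A + M) =
      t ^ 2 * frobSq2 A + 2 * t * ∑ i, ∑ j, A i j * M i j + frobSq2 M := by
  simp only [frobSq2, Matrix.add_apply, Matrix.smul_apply, smul_eq_mul, Fin.sum_univ_two]
  ring

lemma reducedForm_smul_add (lam mu t : ℝ) (A M : M2) :
    reducedForm lam mu (t • A + M) = reducedForm lam mu A * t ^ 2 +
      2 * (mu * lam / (lam + 2 * mu) * A.trace * M.trace + mu * ∑ i, ∑ j, A i j * M i j) * t +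
      reducedForm lam mu M := by
  simp only [reducedForm, frobSq2_smul_add, Matrix.trace_add, Matrix.trace_smul, smul_eq_mul]
  ring

lemma integral_Ioo_quadratic (a b c : ℝ) :
    ∫ t in Set.Ioo (-(1 : ℝ) / 2) (1 / 2), (a * t ^ 2 + b * t + c) = a / 12 + c := by
  rw [← integral_Ioc_eq_integral_Ioo, ← intervalIntegral.integral_of_le (by norm_num)]
  have hquad : IntervalIntegrable (fun t : ℝ => a * t ^ 2) volume (-(1 : ℝ) / 2) (1 / 2) :=
    (continuous_const.mul (continuous_pow 2)).intervalIntegrable _ _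
  have hlin : IntervalIntegrable (fun t : ℝ => b * t) volume (-(1 : ℝ) / 2) (1 / 2) :=
    (continuous_const.mul continuous_id).intervalIntegrable _ _
  rw [intervalIntegral.integral_add (hquad.add hlin) intervalIntegrable_const,
    intervalIntegral.integral_add hquad hlin, intervalIntegral.integral_const_mul,
    intervalIntegral.integral_const_mul, integral_pow, integral_id, intervalIntegral.integral_const]
  norm_num
  ring

lemma integral_reducedForm_smul_add (lam mu : ℝ) (A M : M2) :
    ∫ t in Set.Ioo (-(1 : ℝ) / 2) (1 / 2), reducedForm lam mu (t • A + M) =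
      reducedForm lam mu A / 12 + reducedForm lam mu M := by
  simp only [reducedForm_smul_add]
  exact integral_Ioo_quadratic _ _ _

/-- isotropic representation of the bending stiffness `Q_el`:
with `Q(G) = (λ/2)(tr G)² + μ|sym G|²` and `Q₂(B) = inf_d Q(ι(B)+sym(d⊗e₃))`,
for every symmetric `A` the infimum over symmetric `M` of `∫_{−1/2}^{1/2} Q₂(t·A+M) dt`
is attained and equals `(1/12)((μλ/(λ+2μ))(tr A)² + μ|A|²)`. -/
theorem statement5 (lam mu : ℝ) (hmu : 0 < mu) (hbulk : 0 < 2 * mu + 3 * lam)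
    (Q : M3 → ℝ)
    (hQ : ∀ G, Q G = lam / 2 * (Matrix.trace G) ^ 2 + mu * frobSq3 (symPart G))
    (Q2 : M2 → ℝ)
    (hQ2 : ∀ B, Q2 B = ⨅ d : Fin 3 → ℝ, Q (iota B + symPart (tensorE3 d)))
    (A : M2) (hA : A.IsSymm) :
    IsLeast
      (Set.range fun M : {M : M2 // M.IsSymm} =>
        ∫ t in Set.Ioo (-(1 : ℝ) / 2) (1 / 2), Q2 (t • A + M.val))
      ((1 / 12) * (mu * lam / (lam + 2 * mu) * (Matrix.trace A) ^ 2 + mu * frobSq2 A)) := by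
  have hQ2_eq : ∀ B : M2, B.IsSymm → Q2 B = reducedForm lam mu B := fun B hB => by
    simp only [hQ2, hQ]
    exact (isLeast_range_energy_iota_add_symPart_tensorE3 hmu.le (by linarith) hB).csInf_eq
  have hintegral : ∀ M : {M : M2 // M.IsSymm},
      ∫ t in Set.Ioo (-(1 : ℝ) / 2) (1 / 2), Q2 (t • A + M.val) =
        reducedForm lam mu A / 12 + reducedForm lam mu M.val := fun ⟨M, hM⟩ => by
    rw [← integral_reducedForm_smul_add]
    refine setIntegral_congr_fun measurableSet_Ioo fun t _ => hQ2_eq _ ?_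
    exact (hA.smul t).add hM
  have hvalue : (1 / 12) * (mu * lam / (lam + 2 * mu) * (Matrix.trace A) ^ 2 + mu * frobSq2 A) =
      reducedForm lam mu A / 12 := by
    rw [reducedForm]
    ring
  rw [hvalue]
  refine ⟨⟨⟨0, Matrix.isSymm_zero⟩, (hintegral _).trans (by simp)⟩, ?_⟩
  rintro _ ⟨M, rfl⟩
  dsimp only
  rw [hintegral]
  exact le_add_of_nonneg_right (reducedForm_nonneg hmu.le hbulk M.val)
end
end

section
/- Let C_W > 0 and let Q be a quadratic form on ℝ^{3×3} satisfying (1/C_W)|sym G|² ≤ Q(G) ≤ C_W|sym G|² for all G ∈ ℝ^{3×3}. Then for every A ∈ ℝ^{2×2}_sym, the infimum inf_{d∈ℝ³} Q(ι(A) + sym(d⊗e₃)) is attained and satisfies (1/C_W)|A|² ≤ inf_{d∈ℝ³} Q(ι(A) + sym(d⊗e₃)) ≤ C_W|A|². -/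
open MeasureTheory Matrix Filter Topology

noncomputable section

set_option maxHeartbeats 1000000 in
/-- for a quadratic form `Q` on 3×3 matrices with
`(1/C_W)|sym G|² ≤ Q(G) ≤ C_W|sym G|²`, for every symmetric 2×2 matrix `A` the infimum
`inf_{d∈ℝ³} Q(ι(A)+sym(d⊗e₃))` is attained and lies between `(1/C_W)|A|²` and `C_W|A|²`. -/
theorem statement12 (CW : ℝ) (hCW : 0 < CW) (Q : M3 → ℝ)
    (hquad : ∃ b : M3 →ₗ[ℝ] M3 →ₗ[ℝ] ℝ, (∀ u v, b u v = b v u) ∧ ∀ G, Q G = b G G)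
    (hbound : ∀ G : M3,
      (1 / CW) * frobSq3 (symPart G) ≤ Q G ∧ Q G ≤ CW * frobSq3 (symPart G))
    (A : M2) (hA : A.IsSymm) :
    ∃ v : ℝ,
      IsLeast (Set.range fun d : Fin 3 → ℝ => Q (iota A + symPart (tensorE3 d))) v ∧
      (1 / CW) * frobSq2 A ≤ v ∧ v ≤ CW * frobSq2 A := by
  obtain ⟨b, hbsymm, hQ⟩ := hquad
  set f : (Fin 3 → ℝ) → ℝ := fun d => Q (iota A + symPart (tensorE3 d)) with hfdef
  set X : M3 := iota A with hX
  set N0 : M3 := symPart (tensorE3 (Pi.single 0 1)) with hN0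
  set N1 : M3 := symPart (tensorE3 (Pi.single 1 1)) with hN1
  set N2 : M3 := symPart (tensorE3 (Pi.single 2 1)) with hN2
  -- decomposition of symPart (tensorE3 d)
  have hdecomp : ∀ d : Fin 3 → ℝ,
      symPart (tensorE3 d) = d 0 • N0 + d 1 • N1 + d 2 • N2 := by
    intro d
    ext i j
    fin_cases i <;> fin_cases j <;>
      simp [hN0, hN1, hN2, symPart, tensorE3, Matrix.add_apply, Matrix.smul_apply,
        Matrix.transpose_apply, Pi.single] <;> ring
  -- polynomial expression for f
  have hfd : ∀ d : Fin 3 → ℝ, f d =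
      b X X + (d 0 * b X N0 + d 1 * b X N1 + d 2 * b X N2)
            + (d 0 * b N0 X + d 1 * b N1 X + d 2 * b N2 X)
            + (d 0 * (d 0 * b N0 N0 + d 1 * b N0 N1 + d 2 * b N0 N2)
             + d 1 * (d 0 * b N1 N0 + d 1 * b N1 N1 + d 2 * b N1 N2)
             + d 2 * (d 0 * b N2 N0 + d 1 * b N2 N1 + d 2 * b N2 N2)) := by
    intro d
    show Q (X + symPart (tensorE3 d)) = _
    rw [hQ, hdecomp d]
    simp only [map_add, LinearMap.add_apply, LinearMap.map_smul₂, _root_.map_smul,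
      LinearMap.smul_apply, smul_eq_mul]
    ring
  have hcont : Continuous f := by
    have hfe : f = fun d : Fin 3 → ℝ =>
      b X X + (d 0 * b X N0 + d 1 * b X N1 + d 2 * b X N2)
            + (d 0 * b N0 X + d 1 * b N1 X + d 2 * b N2 X)
            + (d 0 * (d 0 * b N0 N0 + d 1 * b N0 N1 + d 2 * b N0 N2)
             + d 1 * (d 0 * b N1 N0 + d 1 * b N1 N1 + d 2 * b N1 N2)
             + d 2 * (d 0 * b N2 N0 + d 1 * b N2 N1 + d 2 * b N2 N2)) := funext hfd
    rw [hfe]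
    fun_prop
  -- symmetry of X + symPart (tensorE3 d)
  have hsym : ∀ d : Fin 3 → ℝ,
      symPart (X + symPart (tensorE3 d)) = X + symPart (tensorE3 d) := by
    intro d
    have h10 : A 1 0 = A 0 1 := hA.apply 0 1
    ext i j
    fin_cases i <;> fin_cases j <;>
      simp [hX, symPart, iota, tensorE3, Matrix.add_apply, Matrix.smul_apply,
        Matrix.transpose_apply, h10] <;> ring
  -- Frobenius norm computation
  have hfrob : ∀ d : Fin 3 → ℝ,
      frobSq3 (X + symPart (tensorE3 d))
        = frobSq2 A + ((d 0) ^ 2 + (d 1) ^ 2) / 2 + (d 2) ^ 2 := by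
    intro d
    simp [hX, frobSq3, frobSq2, Fin.sum_univ_succ, iota, symPart, tensorE3,
      Matrix.add_apply, Matrix.smul_apply, Matrix.transpose_apply]
    ring
  -- uniform lower bound
  have hlow : ∀ d : Fin 3 → ℝ, (1 / CW) * frobSq2 A ≤ f d := by
    intro d
    have h1 := (hbound (X + symPart (tensorE3 d))).1
    rw [hsym d, hfrob d] at h1
    have hpos : (0:ℝ) < 1 / CW := by positivity
    nlinarith [sq_nonneg (d 0), sq_nonneg (d 1), sq_nonneg (d 2)]
  -- coercivity
  have hcoer : Tendsto f (cocompact (Fin 3 → ℝ)) atTop := by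
    have key : ∀ d : Fin 3 → ℝ,
        (1 / (6 * CW)) * ‖d‖ ^ 2 + (1 / CW) * frobSq2 A ≤ f d := by
      intro d
      have h1 := (hbound (X + symPart (tensorE3 d))).1
      rw [hsym d, hfrob d] at h1
      have hn : ‖d‖ ≤ |d 0| + |d 1| + |d 2| := by
        rw [pi_norm_le_iff_of_nonneg (by positivity)]
        intro i
        fin_cases i <;> simp [Real.norm_eq_abs] <;>
          nlinarith [abs_nonneg (d 0), abs_nonneg (d 1), abs_nonneg (d 2)]
      have hn2 : ‖d‖ ^ 2 ≤ 3 * ((d 0) ^ 2 + (d 1) ^ 2 + (d 2) ^ 2) := by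
        nlinarith [sq_abs (d 0), sq_abs (d 1), sq_abs (d 2), abs_nonneg (d 0),
          abs_nonneg (d 1), abs_nonneg (d 2), norm_nonneg d,
          sq_nonneg (|d 0| - |d 1|), sq_nonneg (|d 0| - |d 2|), sq_nonneg (|d 1| - |d 2|)]
      have hpos : (0:ℝ) < 1 / (6 * CW) := by positivity
      have hmul := mul_le_mul_of_nonneg_left hn2 hpos.le
      have hdiv : (1 / (6 * CW)) * (3 * ((d 0) ^ 2 + (d 1) ^ 2 + (d 2) ^ 2))
          ≤ (1 / CW) * (((d 0) ^ 2 + (d 1) ^ 2) / 2 + (d 2) ^ 2) := by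
        rw [div_mul_eq_mul_div, div_mul_eq_mul_div, one_mul, one_mul,
          div_le_div_iff₀ (by positivity) hCW]
        nlinarith [sq_nonneg (d 2)]
      have hdistr : (1 / CW) * (frobSq2 A + ((d 0) ^ 2 + (d 1) ^ 2) / 2 + (d 2) ^ 2)
          = (1 / CW) * frobSq2 A + (1 / CW) * (((d 0) ^ 2 + (d 1) ^ 2) / 2 + (d 2) ^ 2) := by
        ring
      rw [hdistr] at h1
      linarith
    have h2 : Tendsto (fun d : Fin 3 → ℝ => (1 / (6 * CW)) * ‖d‖ ^ 2 + (1 / CW) * frobSq2 A)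
        (cocompact (Fin 3 → ℝ)) atTop := by
      apply tendsto_atTop_add_const_right
      exact Tendsto.const_mul_atTop (by positivity)
        ((tendsto_pow_atTop two_ne_zero).comp tendsto_norm_cocompact_atTop)
    exact tendsto_atTop_mono key h2
  obtain ⟨d₀, hd₀⟩ := hcont.exists_forall_le hcoer
  refine ⟨f d₀, ⟨⟨d₀, rfl⟩, ?_⟩, hlow d₀, ?_⟩
  · rintro y ⟨d, rfl⟩
    exact hd₀ d
  · have h0 := (hbound (X + symPart (tensorE3 0))).2
    rw [hsym 0, hfrob 0] at h0
    have hle : f d₀ ≤ f 0 := hd₀ 0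
    have : f 0 ≤ CW * frobSq2 A := by
      simpa using h0
    linarith
end
end

section
/- Let Ω ⊆ ℝ³ be a measurable set of finite Lebesgue measure and 1 < p < 2, with conjugate exponent p' = p/(p−1). Let G_k, G : Ω → ℝ^{3×3} (k ∈ ℕ) be measurable with ∫_Ω|G_k|^p dx < ∞ for all k and ∫_Ω|G|^p dx < ∞, and suppose G_k converges to G weakly in L^p, i.e., ∫_Ω G_k·φ dx → ∫_Ω G·φ dx for every measurable φ : Ω → ℝ^{3×3} with ∫_Ω |φ|^{p'} dx < ∞, where · denotes the Frobenius inner product. Let F_k : Ω → ℝ^{3×3} be measurable with det F_k > 0 almost everywhere on Ω for every k, and let R : Ω → ℝ^{3×3} be measurable with R(x) ∈ SO(3) for almost every x ∈ Ω (i.e., R(x)ᵀR(x) = I₃ and det R(x) = 1), such that ∫_Ω |F_k − R|² dx → 0. Then ∫_Ω |G|² dx ≤ liminf_{k→∞} ∫_Ω |G_k F_k^{−1}|² det F_k dx, where both sides are interpreted as values in [0, ∞]. -/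
open MeasureTheory Matrix Filter Topology

noncomputable section

/-- the product σ-algebra on 3×3 matrices (entrywise) -/
instance : MeasurableSpace M3 := inferInstanceAs (MeasurableSpace (Fin 3 → Fin 3 → ℝ))

/-- Frobenius norm of a 3×3 matrix -/
def frobNorm3 (A : M3) : ℝ := Real.sqrt (frobSq3 A)

open scoped ENNReal

/-!
Writing `cof F = (adj F)ᵀ`, completing the square gives, for `det F > 0` and every matrix `φ`,
`|G F⁻¹|² det F ≥ 2 G·(φ cof F) - |φ|² det F`. Take `φ = φ₀ Rᵀ` for a bounded field `φ₀`, cut off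
where `φ cof F_k` is far from `φ₀` or `det F_k ≥ 2`. Along a subsequence realising the liminf on
which `F_k → R` a.e., these test fields converge to `φ₀ Rᵀ R = φ₀` a.e. and boundedly, hence in
`L^{p'}`; since a weakly convergent sequence is bounded (Banach–Steinhaus), the pairing with `G_k`
converges to `∫ G·φ₀`, and `∫ |φ|² det F_k → ∫ |φ₀|²` by dominated convergence. So the liminf is at
least `∫ 2 G·φ₀ - |φ₀|²`, which for `φ₀ = G 1_{|G| ≤ n}` equals `∫_{|G| ≤ n} |G|²`; let `n → ∞`.
-/

attribute [local instance] Matrix.frobeniusNormedAddCommGroup Matrix.frobeniusNormedSpace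

instance : SecondCountableTopology M3 :=
  inferInstanceAs (SecondCountableTopology (Fin 3 → Fin 3 → ℝ))

instance : BorelSpace M3 := inferInstanceAs (BorelSpace (Fin 3 → Fin 3 → ℝ))

-- Instance search does not identify the product topology of `Matrix` with the Frobenius one.
instance : ContinuousENorm M3 := SeminormedAddGroup.toContinuousENorm

def frobInner (A B : M3) : ℝ := ∑ i, ∑ j, A i j * B i j

lemma frobNorm3_eq_norm (A : M3) : frobNorm3 A = ‖A‖ := by
  simp [frobNorm3, frobSq3, Matrix.frobenius_norm_def, Real.sqrt_eq_rpow, Real.norm_eq_abs]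

lemma frobSq3_eq_norm_sq (A : M3) : frobSq3 A = ‖A‖ ^ 2 := by
  rw [← frobNorm3_eq_norm, frobNorm3, Real.sq_sqrt]
  exact Finset.sum_nonneg fun _ _ => Finset.sum_nonneg fun _ _ => sq_nonneg _

lemma frobInner_self (A : M3) : frobInner A A = ‖A‖ ^ 2 := by
  rw [← frobSq3_eq_norm_sq]
  simp only [frobInner, frobSq3, sq]

lemma frobInner_mul_left (A B C : M3) : frobInner (A * B) C = frobInner A (C * Bᵀ) := by
  simp only [frobInner, Matrix.mul_apply, Matrix.transpose_apply, Finset.sum_mul, Finset.mul_sum]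
  refine Finset.sum_congr rfl fun i _ => ?_
  rw [Finset.sum_comm]
  exact Finset.sum_congr rfl fun _ _ => Finset.sum_congr rfl fun _ _ => by ring

lemma frobInner_smul_right (c : ℝ) (A B : M3) : frobInner A (c • B) = c * frobInner A B := by
  simp only [frobInner, Matrix.smul_apply, smul_eq_mul, Finset.mul_sum]
  exact Finset.sum_congr rfl fun _ _ => Finset.sum_congr rfl fun _ _ => by ring

def frobInnerL : M3 →L[ℝ] M3 →L[ℝ] ℝ :=
  LinearMap.toContinuousLinearMap <| LinearMap.toContinuousLinearMap.toLinearMap ∘ₗ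
    LinearMap.mk₂ ℝ frobInner
      (fun A A' B => by
        simp only [frobInner, Matrix.add_apply, add_mul, Finset.sum_add_distrib])
      (fun c A B => by
        simp only [frobInner, Matrix.smul_apply, smul_eq_mul, Finset.mul_sum, mul_assoc])
      (fun A B B' => by
        simp only [frobInner, Matrix.add_apply, mul_add, Finset.sum_add_distrib])
      (fun c A B => frobInner_smul_right c A B)

lemma two_mul_frobInner_sub_le (A B : M3) : 2 * frobInner A B - ‖B‖ ^ 2 ≤ ‖A‖ ^ 2 := by
  have h : 0 ≤ frobSq3 (A - B) :=
    Finset.sum_nonneg fun _ _ => Finset.sum_nonneg fun _ _ => sq_nonneg _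
  have hexp : frobSq3 (A - B) = ‖A‖ ^ 2 - 2 * frobInner A B + ‖B‖ ^ 2 := by
    simp only [← frobSq3_eq_norm_sq, frobSq3, frobInner, Matrix.sub_apply, Finset.mul_sum,
      ← Finset.sum_sub_distrib, ← Finset.sum_add_distrib]
    exact Finset.sum_congr rfl fun _ _ => Finset.sum_congr rfl fun _ _ => by ring
  linarith

lemma Matrix.adjugate_eq_det_smul_inv {n K : Type*} [Fintype n] [DecidableEq n] [Field K]
    (A : Matrix n n K) (h : A.det ≠ 0) : adjugate A = A.det • A⁻¹ := by
  rw [inv_def, smul_smul, Ring.inverse_eq_inv', mul_inv_cancel₀ h, one_smul]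

lemma two_mul_frobInner_adjugate_sub_le (G F φ : M3) (hF : 0 < F.det) :
    2 * frobInner G (φ * (adjugate F)ᵀ) - ‖φ‖ ^ 2 * F.det ≤ frobSq3 (G * F⁻¹) * F.det := by
  have hadj : φ * (adjugate F)ᵀ = F.det • (φ * (F⁻¹)ᵀ) := by
    rw [adjugate_eq_det_smul_inv F hF.ne', transpose_smul, Matrix.mul_smul]
  have h := mul_le_mul_of_nonneg_right (two_mul_frobInner_sub_le (G * F⁻¹) φ) hF.le
  rw [hadj, frobInner_smul_right, ← frobInner_mul_left, frobSq3_eq_norm_sq]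
  nlinarith

lemma adjugate_transpose_eq_self {R : M3} (hR : Rᵀ * R = 1) (hdet : R.det = 1) :
    (adjugate R)ᵀ = R := by
  rw [adjugate_eq_det_smul_inv R (by simp [hdet]), hdet, one_smul, inv_eq_left_inv hR,
    transpose_transpose]

lemma norm_mul_transpose_of_orthogonal {R : M3} (hR : Rᵀ * R = 1) (A : M3) :
    ‖A * Rᵀ‖ = ‖A‖ := by
  have h : ‖A * Rᵀ‖ ^ 2 = ‖A‖ ^ 2 := by
    rw [← frobInner_self, frobInner_mul_left, transpose_transpose, Matrix.mul_assoc, hR,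
      Matrix.mul_one, frobInner_self]
  exact (sq_eq_sq₀ (norm_nonneg _) (norm_nonneg _)).mp h

section FunctionalAnalysis

variable {𝕜 E F : Type*} [NontriviallyNormedField 𝕜] [NormedAddCommGroup E] [NormedSpace 𝕜 E]
  [CompleteSpace E] [NormedAddCommGroup F] [NormedSpace 𝕜 F]

theorem tendsto_apply_of_tendsto_pointwise {T : ℕ → E →L[𝕜] F} {L : E → F}
    (hT : ∀ x, Tendsto (fun k => T k x) atTop (𝓝 (L x))) {x : ℕ → E} {x₀ : E}
    (hx : Tendsto x atTop (𝓝 x₀)) : Tendsto (fun k => T k (x k)) atTop (𝓝 (L x₀)) := by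
  obtain ⟨C, hC⟩ := banach_steinhaus fun y => by
    obtain ⟨C, hC⟩ := (hT y).norm.bddAbove_range
    exact ⟨C, fun k => hC (Set.mem_range_self k)⟩
  have hsmall : Tendsto (fun k => T k (x k - x₀)) atTop (𝓝 0) := by
    refine squeeze_zero_norm (fun k => ((T k).le_opNorm _).trans
      (mul_le_mul_of_nonneg_right (hC k) (norm_nonneg _))) ?_
    simpa using (tendsto_iff_norm_sub_tendsto_zero.mp hx).const_mul C
  simpa [map_sub] using hsmall.add (hT x₀)

end FunctionalAnalysis

section Lp

variable {α E : Type*} [MeasurableSpace α] {μ : Measure α} [NormedAddCommGroup E] {p : ℝ≥0∞}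

theorem unifIntegrable_of_ae_norm_le {ι : Type*} (hp : 1 ≤ p) (hp' : p ≠ ∞) {f : ι → α → E}
    (hf : ∀ n, AEStronglyMeasurable (f n) μ) {M : ℝ} (hM : ∀ n, ∀ᵐ x ∂μ, ‖f n x‖ ≤ M) :
    UnifIntegrable f p μ := by
  refine unifIntegrable_of hp hp' hf fun ε hε => ⟨(M + 1).toNNReal, fun n => ?_⟩
  have hzero : {x | (M + 1).toNNReal ≤ ‖f n x‖₊}.indicator (f n) =ᵐ[μ] 0 := by
    filter_upwards [hM n] with x hx
    refine Set.indicator_of_notMem (fun hmem => ?_) _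
    have : M + 1 ≤ ‖f n x‖ := by
      simpa using (Real.toNNReal_le_iff_le_coe.mp hmem)
    linarith
  rw [eLpNorm_congr_ae hzero, eLpNorm_zero]
  exact zero_le

theorem tendsto_eLpNorm_sub_of_ae_tendsto_of_norm_le [IsFiniteMeasure μ] (hp : 1 ≤ p)
    (hp' : p ≠ ∞) {f : ℕ → α → E} {g : α → E} (hf : ∀ n, AEStronglyMeasurable (f n) μ)
    (hg : MemLp g p μ) {M : ℝ} (hM : ∀ n, ∀ᵐ x ∂μ, ‖f n x‖ ≤ M)
    (hfg : ∀ᵐ x ∂μ, Tendsto (fun n => f n x) atTop (𝓝 (g x))) :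
    Tendsto (fun n => eLpNorm (f n - g) p μ) atTop (𝓝 0) :=
  tendsto_Lp_finite_of_tendsto_ae hp hp' hf hg (unifIntegrable_of_ae_norm_le hp hp' hf hM) hfg

variable {F : Type*} [NormedAddCommGroup F] [NormedSpace ℝ E] [NormedSpace ℝ F] [CompleteSpace F]
  {q : ℝ≥0∞} [Fact (1 ≤ p)] [Fact (1 ≤ q)] [p.HolderConjugate q]

theorem tendsto_integral_bilin_of_weak_of_tendsto_eLpNorm (B : E →L[ℝ] F →L[ℝ] ℝ)
    {f : ℕ → α → E} {f' : α → E} (hf : ∀ k, MemLp (f k) p μ)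
    (hweak : ∀ g : α → F, StronglyMeasurable g → MemLp g q μ →
      Tendsto (fun k => ∫ x, B (f k x) (g x) ∂μ) atTop (𝓝 (∫ x, B (f' x) (g x) ∂μ)))
    {g : ℕ → α → F} {g' : α → F} (hg : ∀ k, MemLp (g k) q μ) (hg' : MemLp g' q μ)
    (hgg' : Tendsto (fun k => eLpNorm (g k - g') q μ) atTop (𝓝 0)) :
    Tendsto (fun k => ∫ x, B (f k x) (g k x) ∂μ) atTop (𝓝 (∫ x, B (f' x) (g' x) ∂μ)) := by
  set T : ℕ → Lp F q μ →L[ℝ] ℝ := fun k => B.lpPairing μ p q ((hf k).toLp (f k))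
  have hT : ∀ k (h : Lp F q μ), T k h = ∫ x, B (f k x) (h x) ∂μ := fun k h => by
    rw [B.lpPairing_eq_integral]
    refine integral_congr_ae ?_
    filter_upwards [(hf k).coeFn_toLp] with x hx
    rw [hx]
  have hlimit_congr : ∀ {h : Lp F q μ} {h' : α → F}, (h : α → F) =ᵐ[μ] h' →
      ∫ x, B (f' x) (h x) ∂μ = ∫ x, B (f' x) (h' x) ∂μ := fun hh' =>
    integral_congr_ae (by filter_upwards [hh'] with x hx; rw [hx])
  have hpointwise : ∀ h : Lp F q μ,
      Tendsto (fun k => T k h) atTop (𝓝 (∫ x, B (f' x) (h x) ∂μ)) := fun h => by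
    have hmk := (Lp.aestronglyMeasurable h).ae_eq_mk
    rw [hlimit_congr hmk]
    convert hweak _ (Lp.aestronglyMeasurable h).stronglyMeasurable_mk
      ((Lp.memLp h).ae_eq hmk) using 2 with k
    rw [hT]
    exact integral_congr_ae (by filter_upwards [hmk] with x hx; rw [hx])
  have hconv := (Lp.tendsto_Lp_iff_tendsto_eLpNorm'' g hg g' hg').mpr hgg'
  convert tendsto_apply_of_tendsto_pointwise hpointwise hconv using 1
  · funext k
    rw [hT]
    exact integral_congr_ae (by filter_upwards [(hg k).coeFn_toLp] with x hx; rw [hx])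
  · rw [hlimit_congr hg'.coeFn_toLp]

end Lp

section Integration

variable {α : Type*} [MeasurableSpace α] {μ : Measure α}

lemma ofReal_frobNorm3_rpow (A : M3) {r : ℝ} (hr : 0 ≤ r) :
    ENNReal.ofReal (frobNorm3 A ^ r) = ‖A‖ₑ ^ r := by
  rw [frobNorm3_eq_norm, ← ENNReal.ofReal_rpow_of_nonneg (norm_nonneg _) hr, ofReal_norm]

lemma memLp_ofReal_iff_lintegral_frobNorm3_rpow_lt_top {f : α → M3}
    (hf : AEStronglyMeasurable f μ) {r : ℝ} (hr : 0 < r) :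
    MemLp f (ENNReal.ofReal r) μ ↔ ∫⁻ x, ENNReal.ofReal (frobNorm3 (f x) ^ r) ∂μ < ⊤ := by
  simp only [ofReal_frobNorm3_rpow _ hr.le]
  rw [MemLp, and_iff_right hf, eLpNorm_lt_top_iff_lintegral_rpow_enorm_lt_top
    (by simpa using hr) ENNReal.ofReal_ne_top, ENNReal.toReal_ofReal hr.le]

lemma tendstoInMeasure_of_tendsto_lintegral_frobSq3 {F : ℕ → α → M3} {R : α → M3}
    (hF : ∀ k, AEStronglyMeasurable (F k) μ) (hR : AEStronglyMeasurable R μ)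
    (h : Tendsto (fun k => ∫⁻ x, ENNReal.ofReal (frobSq3 (F k x - R x)) ∂μ) atTop (𝓝 0)) :
    TendstoInMeasure μ F atTop R := by
  refine tendstoInMeasure_of_tendsto_eLpNorm two_ne_zero hF hR ?_
  have hL2 : ∀ k, eLpNorm (F k - R) 2 μ =
      (∫⁻ x, ENNReal.ofReal (frobSq3 (F k x - R x)) ∂μ) ^ (1 / 2 : ℝ) := fun k => by
    simp only [eLpNorm_eq_lintegral_rpow_enorm_toReal two_ne_zero ENNReal.ofNat_ne_top,
      ENNReal.toReal_ofNat, Pi.sub_apply, frobSq3_eq_norm_sq, ← frobNorm3_eq_norm,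
      ← Real.rpow_two, ofReal_frobNorm3_rpow _ zero_le_two]
  simp only [hL2]
  have h0 : (0 : ℝ≥0∞) ^ (1 / 2 : ℝ) = 0 := ENNReal.zero_rpow_of_pos (by norm_num)
  exact h0 ▸ (ENNReal.continuous_rpow_const.tendsto 0).comp h

lemma ofReal_integral_le_lintegral_ofReal (f : α → ℝ) :
    ENNReal.ofReal (∫ x, f x ∂μ) ≤ ∫⁻ x, ENNReal.ofReal (f x) ∂μ := by
  by_cases hf : Integrable f μ
  · rw [integral_eq_lintegral_pos_part_sub_lintegral_neg_part hf]
    exact (ENNReal.ofReal_le_ofReal (sub_le_self _ ENNReal.toReal_nonneg)).trans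
      ENNReal.ofReal_toReal_le
  · simp [integral_undef hf]

lemma lintegral_eq_iSup_setLIntegral_norm_le {E : Type*} [Norm E] (f : α → E) (g : α → ℝ≥0∞) :
    ∫⁻ x, g x ∂μ = ⨆ n : ℕ, ∫⁻ x in {x | ‖f x‖ ≤ n}, g x ∂μ := by
  have hcover : (⋃ n : ℕ, {x | ‖f x‖ ≤ n}) = Set.univ :=
    Set.eq_univ_of_forall fun x => Set.mem_iUnion.mpr (exists_nat_ge ‖f x‖)
  have hmono : Monotone fun n : ℕ => {x | ‖f x‖ ≤ n} := fun m n hmn x (hx : ‖f x‖ ≤ m) =>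
    hx.trans (Nat.cast_le.mpr hmn)
  rw [← setLIntegral_iUnion_of_directed _ hmono.directed_le, hcover, Measure.restrict_univ]

end Integration

lemma tendsto_mul_transpose_mul_adjugate_transpose_and_det {R : M3} (hR : Rᵀ * R = 1)
    (hdet : R.det = 1) {F : ℕ → M3} (hF : Tendsto F atTop (𝓝 R)) (A : M3) :
    Tendsto (fun k => A * Rᵀ * (adjugate (F k))ᵀ) atTop (𝓝 A) ∧
      Tendsto (fun k => (F k).det) atTop (𝓝 1) ∧
      ∀ᶠ k in atTop, ‖A * Rᵀ * (adjugate (F k))ᵀ - A‖ < 1 ∧ (F k).det < 2 := by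
  have hcont : Continuous fun B : M3 => A * Rᵀ * (adjugate B)ᵀ := by fun_prop
  have hval : A * Rᵀ * (adjugate R)ᵀ = A := by
    rw [adjugate_transpose_eq_self hR hdet, Matrix.mul_assoc, hR, Matrix.mul_one]
  have htest := (hcont.tendsto R).comp hF
  rw [hval] at htest
  have hdetF : Tendsto (fun k => (F k).det) atTop (𝓝 1) :=
    hdet ▸ (continuous_id.matrix_det.tendsto R).comp hF
  exact ⟨htest, hdetF, ((tendsto_iff_norm_sub_tendsto_zero.mp htest).eventually
    (gt_mem_nhds one_pos)).and (hdetF.eventually (gt_mem_nhds one_lt_two))⟩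

section LowerSemicontinuity

variable {α : Type*} [MeasurableSpace α] {μ : Measure α}

lemma ofReal_two_mul_integral_frobInner_sub_le_lintegral {G F φ : α → M3} (S : Set α)
    (hdet : ∀ᵐ x ∂μ, 0 < (F x).det)
    (hint : Integrable
      (fun x => frobInner (G x) (S.indicator (fun x => φ x * (adjugate (F x))ᵀ) x)) μ)
    (hint' : Integrable (S.indicator fun x => ‖φ x‖ ^ 2 * (F x).det) μ) :
    ENNReal.ofReal (2 * ∫ x, frobInner (G x) (S.indicator (fun x => φ x * (adjugate (F x))ᵀ) x) ∂μ -
      ∫ x, S.indicator (fun x => ‖φ x‖ ^ 2 * (F x).det) x ∂μ) ≤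
      ∫⁻ x, ENNReal.ofReal (frobSq3 (G x * (F x)⁻¹) * (F x).det) ∂μ := by
  rw [← integral_const_mul, ← integral_sub (hint.const_mul 2) hint']
  refine (ofReal_integral_le_lintegral_ofReal _).trans (lintegral_mono_ae ?_)
  filter_upwards [hdet] with x hdetx
  by_cases hx : x ∈ S
  · simp only [Set.indicator_of_mem hx]
    exact ENNReal.ofReal_le_ofReal (two_mul_frobInner_adjugate_sub_le (G x) (F x) (φ x) hdetx)
  · simp [Set.indicator_of_notMem hx, frobInner]

variable [IsFiniteMeasure μ] {p q : ℝ≥0∞} [Fact (1 ≤ p)] [Fact (1 ≤ q)] [p.HolderConjugate q]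

theorem tendsto_integral_frobInner_of_ae_tendsto (hq : q ≠ ∞) {G : ℕ → α → M3} {G' : α → M3}
    (hG : ∀ k, MemLp (G k) p μ)
    (hweak : ∀ φ : α → M3, StronglyMeasurable φ → MemLp φ q μ →
      Tendsto (fun k => ∫ x, frobInner (G k x) (φ x) ∂μ) atTop
        (𝓝 (∫ x, frobInner (G' x) (φ x) ∂μ)))
    {Ψ : ℕ → α → M3} {φ₀ : α → M3} (hΨ : ∀ k, AEStronglyMeasurable (Ψ k) μ) {M : ℝ}
    (hΨM : ∀ k x, ‖Ψ k x‖ ≤ M) (hφ₀ : MemLp φ₀ q μ)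
    (hΨφ₀ : ∀ᵐ x ∂μ, Tendsto (fun k => Ψ k x) atTop (𝓝 (φ₀ x))) :
    Tendsto (fun k => ∫ x, frobInner (G k x) (Ψ k x) ∂μ) atTop
      (𝓝 (∫ x, frobInner (G' x) (φ₀ x) ∂μ)) :=
  tendsto_integral_bilin_of_weak_of_tendsto_eLpNorm frobInnerL hG hweak
    (fun k => MemLp.of_bound (hΨ k) M (ae_of_all _ (hΨM k))) hφ₀
    (tendsto_eLpNorm_sub_of_ae_tendsto_of_norm_le Fact.out hq hΨ hφ₀
      (fun k => ae_of_all _ (hΨM k)) hΨφ₀)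

theorem ofReal_two_mul_integral_frobInner_sub_le_liminf (hq : q ≠ ∞) {G : ℕ → α → M3}
    {G' : α → M3} (hG : ∀ k, MemLp (G k) p μ)
    (hweak : ∀ φ : α → M3, StronglyMeasurable φ → MemLp φ q μ →
      Tendsto (fun k => ∫ x, frobInner (G k x) (φ x) ∂μ) atTop
        (𝓝 (∫ x, frobInner (G' x) (φ x) ∂μ)))
    {F : ℕ → α → M3} (hFmeas : ∀ k, Measurable (F k)) (hFdet : ∀ k, ∀ᵐ x ∂μ, 0 < (F k x).det)
    {R : α → M3} (hRmeas : Measurable R) (hSO : ∀ᵐ x ∂μ, (R x)ᵀ * R x = 1 ∧ (R x).det = 1)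
    (hFR : ∀ᵐ x ∂μ, Tendsto (fun k => F k x) atTop (𝓝 (R x)))
    {φ₀ : α → M3} (hφ₀ : Measurable φ₀) {c : ℝ} (hc : ∀ x, ‖φ₀ x‖ ≤ c) :
    ENNReal.ofReal (2 * ∫ x, frobInner (G' x) (φ₀ x) ∂μ - ∫ x, ‖φ₀ x‖ ^ 2 ∂μ) ≤
      liminf (fun k => ∫⁻ x, ENNReal.ofReal (frobSq3 (G k x * (F k x)⁻¹) * (F k x).det) ∂μ)
        atTop := by
  set Φ : ℕ → α → M3 := fun k x => φ₀ x * (R x)ᵀ * (adjugate (F k x))ᵀ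
  -- The cut-off keeps the test fields bounded; off `good k` the energy density is only `≥ 0`.
  set good : ℕ → Set α := fun k => {x | ‖Φ k x - φ₀ x‖ < 1 ∧ (F k x).det < 2}
  set Ψ : ℕ → α → M3 := fun k => (good k).indicator (Φ k)
  set v : ℕ → α → ℝ := fun k => (good k).indicator fun x => ‖φ₀ x * (R x)ᵀ‖ ^ 2 * (F k x).det
  have hgood : ∀ k, MeasurableSet (good k) := fun k =>
    (measurableSet_lt (f := fun x => ‖Φ k x - φ₀ x‖) (by fun_prop) measurable_const).inter
      (measurableSet_lt (f := fun x => (F k x).det) (by fun_prop) measurable_const)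
  have hΨmeas : ∀ k, Measurable (Ψ k) := fun k => Measurable.indicator (by fun_prop) (hgood k)
  have hvmeas : ∀ k, Measurable (v k) := fun k => Measurable.indicator (by fun_prop) (hgood k)
  have hΨle : ∀ k x, ‖Ψ k x‖ ≤ c + 1 := fun k x => by
    rw [norm_indicator_eq_indicator_norm]
    refine Set.indicator_apply_le' (fun hx => ?_) (fun _ => by linarith [norm_nonneg (φ₀ x), hc x])
    linarith [norm_le_norm_add_norm_sub' (Φ k x) (φ₀ x), hx.1, hc x]
  have hvle : ∀ k, ∀ᵐ x ∂μ, ‖v k x‖ ≤ 2 * c ^ 2 := fun k => by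
    filter_upwards [hSO, hFdet k] with x hRx hdet
    rw [norm_indicator_eq_indicator_norm]
    refine Set.indicator_apply_le' (fun hx => ?_) (fun _ => by positivity)
    rw [norm_mul_transpose_of_orthogonal hRx.1, Real.norm_eq_abs, abs_of_nonneg (by positivity)]
    nlinarith [mul_le_mul (pow_le_pow_left₀ (norm_nonneg _) (hc x) 2) hx.2.le hdet.le (sq_nonneg c)]
  have hlim : ∀ᵐ x ∂μ, Tendsto (fun k => Φ k x) atTop (𝓝 (φ₀ x)) ∧
      Tendsto (fun k => (F k x).det) atTop (𝓝 1) ∧ ∀ᶠ k in atTop, x ∈ good k := by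
    filter_upwards [hSO, hFR] with x hRx hFx
    exact tendsto_mul_transpose_mul_adjugate_transpose_and_det hRx.1 hRx.2 hFx (φ₀ x)
  have hpair : Tendsto (fun k => ∫ x, frobInner (G k x) (Ψ k x) ∂μ) atTop
      (𝓝 (∫ x, frobInner (G' x) (φ₀ x) ∂μ)) := by
    refine tendsto_integral_frobInner_of_ae_tendsto hq hG hweak
      (fun k => (hΨmeas k).aestronglyMeasurable) hΨle
      (MemLp.of_bound hφ₀.aestronglyMeasurable _ (ae_of_all _ hc)) ?_
    filter_upwards [hlim] with x hx
    refine hx.1.congr' ?_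
    filter_upwards [hx.2.2] with k hk
    exact (Set.indicator_of_mem hk _).symm
  have hv : Tendsto (fun k => ∫ x, v k x ∂μ) atTop (𝓝 (∫ x, ‖φ₀ x‖ ^ 2 ∂μ)) := by
    refine tendsto_integral_of_dominated_convergence (fun _ => 2 * c ^ 2)
      (fun k => (hvmeas k).aestronglyMeasurable) (integrable_const _) hvle ?_
    filter_upwards [hSO, hlim] with x hRx hx
    have h := (tendsto_const_nhds (x := ‖φ₀ x‖ ^ 2)).mul hx.2.1
    rw [mul_one] at h
    refine h.congr' ?_
    filter_upwards [hx.2.2] with k hk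
    simp only [v, Set.indicator_of_mem hk, norm_mul_transpose_of_orthogonal hRx.1]
  have hlow : ∀ k, ENNReal.ofReal (2 * ∫ x, frobInner (G k x) (Ψ k x) ∂μ - ∫ x, v k x ∂μ) ≤
      ∫⁻ x, ENNReal.ofReal (frobSq3 (G k x * (F k x)⁻¹) * (F k x).det) ∂μ := fun k =>
    ofReal_two_mul_integral_frobInner_sub_le_lintegral (good k) (hFdet k)
      (frobInnerL.integrable_of_bilin_of_bdd_right (c + 1) ((hG k).integrable Fact.out)
        (hΨmeas k).aestronglyMeasurable (ae_of_all _ (hΨle k)))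
      (Integrable.of_bound (hvmeas k).aestronglyMeasurable _ (hvle k))
  rw [← (ENNReal.tendsto_ofReal ((hpair.const_mul 2).sub hv)).liminf_eq]
  exact liminf_le_liminf (Eventually.of_forall hlow)

end LowerSemicontinuity

lemma norm_indicator_norm_le_le {α E : Type*} [SeminormedAddCommGroup E] (f : α → E) {c : ℝ}
    (hc : 0 ≤ c) (x : α) : ‖{x | ‖f x‖ ≤ c}.indicator f x‖ ≤ c := by
  by_cases hx : x ∈ {x | ‖f x‖ ≤ c}
  · rwa [Set.indicator_of_mem hx]
  · rwa [Set.indicator_of_notMem hx, norm_zero]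

section Truncation

variable {α : Type*} [MeasurableSpace α] {μ : Measure α}

lemma setLIntegral_frobSq3_eq_ofReal [IsFiniteMeasure μ] {f : α → M3} (hf : Measurable f)
    (n : ℕ) :
    ∫⁻ x in {x | ‖f x‖ ≤ n}, ENNReal.ofReal (frobSq3 (f x)) ∂μ =
      ENNReal.ofReal (2 * ∫ x, frobInner (f x) ({x | ‖f x‖ ≤ n}.indicator f x) ∂μ -
        ∫ x, ‖{x | ‖f x‖ ≤ n}.indicator f x‖ ^ 2 ∂μ) := by
  set S := {x | ‖f x‖ ≤ n}
  have hS : MeasurableSet S := measurableSet_le (by fun_prop) measurable_const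
  have hφ₀ : Measurable (S.indicator f) := hf.indicator hS
  have hinner : ∀ x, frobInner (f x) (S.indicator f x) = ‖S.indicator f x‖ ^ 2 := fun x => by
    by_cases hx : x ∈ S
    · rw [Set.indicator_of_mem hx, frobInner_self]
    · simp [Set.indicator_of_notMem hx, frobInner]
  have hint : Integrable (fun x => ‖S.indicator f x‖ ^ 2) μ :=
    Integrable.of_bound (by fun_prop) ((n : ℝ) ^ 2) (ae_of_all _ fun x => by
      rw [Real.norm_eq_abs, abs_of_nonneg (by positivity)]
      exact pow_le_pow_left₀ (norm_nonneg _) (norm_indicator_norm_le_le f n.cast_nonneg x) 2)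
  calc ∫⁻ x in S, ENNReal.ofReal (frobSq3 (f x)) ∂μ
      = ∫⁻ x, ENNReal.ofReal (‖S.indicator f x‖ ^ 2) ∂μ := by
        rw [← lintegral_indicator hS]
        refine lintegral_congr fun x => ?_
        by_cases hx : x ∈ S
        · simp [Set.indicator_of_mem hx, frobSq3_eq_norm_sq]
        · simp [Set.indicator_of_notMem hx]
    _ = ENNReal.ofReal (∫ x, ‖S.indicator f x‖ ^ 2 ∂μ) :=
        (ofReal_integral_eq_lintegral_ofReal hint (ae_of_all _ fun x => by positivity)).symm
    _ = _ := by
        simp only [hinner]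
        ring_nf

end Truncation

theorem statement13_general (Ω : Set (Fin 3 → ℝ))
    (hfin : volume Ω < ⊤)
    (p : ℝ) (hp1 : 1 < p)
    (G : ℕ → (Fin 3 → ℝ) → M3) (Gl : (Fin 3 → ℝ) → M3)
    (hGmeas : ∀ k, Measurable (G k)) (hGlmeas : Measurable Gl)
    (hGint : ∀ k,
      (∫⁻ x in Ω, ENNReal.ofReal (frobNorm3 (G k x) ^ p)) < ⊤)
    (hweak : ∀ φ : (Fin 3 → ℝ) → M3, Measurable φ →
      (∫⁻ x in Ω, ENNReal.ofReal (frobNorm3 (φ x) ^ (p / (p - 1)))) < ⊤ →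
      Tendsto (fun k => ∫ x in Ω, ∑ i, ∑ j, G k x i j * φ x i j) atTop
        (𝓝 (∫ x in Ω, ∑ i, ∑ j, Gl x i j * φ x i j)))
    (F : ℕ → (Fin 3 → ℝ) → M3) (hFmeas : ∀ k, Measurable (F k))
    (hFdet : ∀ k, ∀ᵐ x ∂(volume.restrict Ω), 0 < (F k x).det)
    (R : (Fin 3 → ℝ) → M3) (hRmeas : Measurable R)
    (hSO : ∀ᵐ x ∂(volume.restrict Ω), (R x)ᵀ * R x = 1 ∧ (R x).det = 1)
    (hFconv : Tendsto (fun k => ∫⁻ x in Ω, ENNReal.ofReal (frobSq3 (F k x - R x)))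
      atTop (𝓝 0)) :
    (∫⁻ x in Ω, ENNReal.ofReal (frobSq3 (Gl x)))
      ≤ Filter.liminf
          (fun k => ∫⁻ x in Ω,
            ENNReal.ofReal (frobSq3 (G k x * (F k x)⁻¹) * (F k x).det)) atTop := by
  have : IsFiniteMeasure (volume.restrict Ω) := isFiniteMeasure_restrict.mpr hfin.ne
  have hpq : p.HolderConjugate (p / (p - 1)) := .conjExponent hp1
  have : (ENNReal.ofReal p).HolderConjugate (ENNReal.ofReal (p / (p - 1))) := hpq.ennrealOfReal
  have : Fact (1 ≤ ENNReal.ofReal p) := ⟨ENNReal.one_le_ofReal.mpr hp1.le⟩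
  have : Fact (1 ≤ ENNReal.ofReal (p / (p - 1))) := ⟨ENNReal.one_le_ofReal.mpr hpq.symm.lt.le⟩
  obtain ⟨ns, hliminf, hns⟩ := exists_seq_tendsto_liminf (f := atTop) (u := fun k =>
    ∫⁻ x in Ω, ENNReal.ofReal (frobSq3 (G k x * (F k x)⁻¹) * (F k x).det))
  obtain ⟨ms, hms, hFR⟩ := ((tendstoInMeasure_of_tendsto_lintegral_frobSq3
    (fun k => (hFmeas k).aestronglyMeasurable) hRmeas.aestronglyMeasurable hFconv).comp
      hns).exists_seq_tendsto_ae'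
  rw [← (hliminf.comp hms).liminf_eq, lintegral_eq_iSup_setLIntegral_norm_le Gl]
  refine iSup_le fun n => ?_
  rw [setLIntegral_frobSq3_eq_ofReal hGlmeas n]
  exact ofReal_two_mul_integral_frobInner_sub_le_liminf ENNReal.ofReal_ne_top
    (fun k => (memLp_ofReal_iff_lintegral_frobNorm3_rpow_lt_top
      (hGmeas _).aestronglyMeasurable (zero_lt_one.trans hp1)).mpr (hGint _))
    (fun φ hφ hφq => (hweak φ hφ.measurable ((memLp_ofReal_iff_lintegral_frobNorm3_rpow_lt_top
      hφ.aestronglyMeasurable hpq.symm.pos).mp hφq)).comp (hns.comp hms))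
    (fun _ => hFmeas _) (fun _ => hFdet _) hRmeas hSO hFR
    (hGlmeas.indicator (measurableSet_le (by fun_prop) measurable_const))
    (norm_indicator_norm_le_le Gl n.cast_nonneg)

/-- weak-`Lᵖ` lower semicontinuity of the transported Dirichlet energy:
if `G_k ⇀ G` weakly in `Lᵖ(Ω)` (`1 < p < 2`, `p' = p/(p−1)`), `det F_k > 0` a.e.,
`R ∈ SO(3)` a.e. and `F_k → R` in `L²(Ω)`, then
`∫_Ω |G|² ≤ liminf_k ∫_Ω |G_k F_k⁻¹|² det F_k` (both sides in `[0,∞]`). -/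
theorem statement13 (Ω : Set (Fin 3 → ℝ)) (hΩ : MeasurableSet Ω)
    (hfin : volume Ω < ⊤)
    (p : ℝ) (hp1 : 1 < p) (hp2 : p < 2)
    (G : ℕ → (Fin 3 → ℝ) → M3) (Gl : (Fin 3 → ℝ) → M3)
    (hGmeas : ∀ k, Measurable (G k)) (hGlmeas : Measurable Gl)
    (hGint : ∀ k,
      (∫⁻ x in Ω, ENNReal.ofReal (frobNorm3 (G k x) ^ p)) < ⊤)
    (hGlint : (∫⁻ x in Ω, ENNReal.ofReal (frobNorm3 (Gl x) ^ p)) < ⊤)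
    (hweak : ∀ φ : (Fin 3 → ℝ) → M3, Measurable φ →
      (∫⁻ x in Ω, ENNReal.ofReal (frobNorm3 (φ x) ^ (p / (p - 1)))) < ⊤ →
      Tendsto (fun k => ∫ x in Ω, ∑ i, ∑ j, G k x i j * φ x i j) atTop
        (𝓝 (∫ x in Ω, ∑ i, ∑ j, Gl x i j * φ x i j)))
    (F : ℕ → (Fin 3 → ℝ) → M3) (hFmeas : ∀ k, Measurable (F k))
    (hFdet : ∀ k, ∀ᵐ x ∂(volume.restrict Ω), 0 < (F k x).det)
    (R : (Fin 3 → ℝ) → M3) (hRmeas : Measurable R)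
    (hSO : ∀ᵐ x ∂(volume.restrict Ω), (R x)ᵀ * R x = 1 ∧ (R x).det = 1)
    (hFconv : Tendsto (fun k => ∫⁻ x in Ω, ENNReal.ofReal (frobSq3 (F k x - R x)))
      atTop (𝓝 0)) :
    (∫⁻ x in Ω, ENNReal.ofReal (frobSq3 (Gl x)))
      ≤ Filter.liminf
          (fun k => ∫⁻ x in Ω,
            ENNReal.ofReal (frobSq3 (G k x * (F k x)⁻¹) * (F k x).det)) atTop :=
  statement13_general Ω hfin p hp1 G Gl hGmeas hGlmeas hGint hweak F hFmeas hFdet R hRmeas hSO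
    hFconv
end
end

section
/- Let Ω ⊆ ℝ³ be a measurable set of finite Lebesgue measure, let ρ : Ω → ℝ be integrable with ρ ≥ 0 almost everywhere, and let n̂₀ : Ω → ℝ³ be measurable with |n̂₀| = 1 almost everywhere. Let F_k, R : Ω → ℝ^{3×3} (k ∈ ℕ) be measurable with det F_k > 0 almost everywhere for each k and R(x) ∈ SO(3) for almost every x (i.e., R(x)ᵀR(x) = I₃, det R(x) = 1), such that ∫_Ω |F_k − R|² dx → 0. Let n_k, n : Ω → ℝ³ be measurable with |n_k| = 1 almost everywhere for each k and ∫_Ω |n_k − n|² dx → 0. Then ∫_Ω | F_kᵀ n_k / |F_kᵀ n_k| − n̂₀ |² ρ dx → ∫_Ω | Rᵀ n − n̂₀ |² ρ dx as k → ∞. -/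
/-!
The L² hypotheses give convergence in measure, so every subsequence has a further subsequence
along which `F_k → R` and `n_k → n` almost everywhere. At such points `F_kᵀ n_k → Rᵀ n`, which
is a unit vector (`R` is orthogonal and `n` is a limit of unit vectors); normalization is
continuous away from `0`, so the integrands converge. Both vectors in the integrand have length
at most `1`, so it is dominated by `4 |ρ|`, and dominated convergence along the subsequences
gives convergence of the whole sequence.
-/

open MeasureTheory Matrix Filter Topology

noncomputable section

/-- normalization `v ↦ v/|v|` of a vector in ℝ³ (Euclidean norm) -/
def normalize3 (v : Fin 3 → ℝ) : Fin 3 → ℝ := (Real.sqrt (∑ i, v i ^ 2))⁻¹ • v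


instance inst_s14 : BorelSpace M3 := inferInstanceAs (BorelSpace (Fin 3 → Fin 3 → ℝ))

instance : MeasurableSub₂ M3 := inferInstanceAs (MeasurableSub₂ (Fin 3 → Fin 3 → ℝ))

namespace MeasureTheory

variable {α : Type*} [MeasurableSpace α] {μ : Measure α}

theorem tendstoInMeasure_zero_of_tendsto_lintegral {ι : Type*} {l : Filter ι}
    {f : ι → α → ℝ} (hf_nonneg : ∀ i x, 0 ≤ f i x) (hf : ∀ i, AEStronglyMeasurable (f i) μ)
    (h : Tendsto (fun i => ∫⁻ x, ENNReal.ofReal (f i x) ∂μ) l (𝓝 0)) :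
    TendstoInMeasure μ f l 0 := by
  refine tendstoInMeasure_of_tendsto_eLpNorm one_ne_zero hf aestronglyMeasurable_zero ?_
  convert h using 2 with i
  rw [sub_zero, eLpNorm_one_eq_lintegral_enorm]
  exact lintegral_congr fun x => Real.enorm_eq_ofReal (hf_nonneg i x)

theorem TendstoInMeasure.comp_tendsto {ι κ E : Type*} [EDist E] {l : Filter ι} {l' : Filter κ}
    {f : ι → α → E} {g : α → E} (h : TendstoInMeasure μ f l g) {ns : κ → ι}
    (hns : Tendsto ns l' l) : TendstoInMeasure μ (fun k => f (ns k)) l' g :=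
  fun ε hε => (h ε hε).comp hns

theorem TendstoInMeasure.exists_seq_tendsto_ae_prod {E E' : Type*} [PseudoEMetricSpace E]
    [PseudoEMetricSpace E'] {f : ℕ → α → E} {g : α → E} {f' : ℕ → α → E'} {g' : α → E'}
    (h : TendstoInMeasure μ f atTop g) (h' : TendstoInMeasure μ f' atTop g') :
    ∃ ns : ℕ → ℕ, StrictMono ns ∧ ∀ᵐ x ∂μ, Tendsto (fun i => f (ns i) x) atTop (𝓝 (g x)) ∧
      Tendsto (fun i => f' (ns i) x) atTop (𝓝 (g' x)) := by
  obtain ⟨ns, hns, hae⟩ := h.exists_seq_tendsto_ae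
  obtain ⟨ms, hms, hae'⟩ := (h'.comp_tendsto hns.tendsto_atTop).exists_seq_tendsto_ae
  refine ⟨ns ∘ ms, hns.comp hms, ?_⟩
  filter_upwards [hae, hae'] with x hx hx'
  exact ⟨hx.comp hms.tendsto_atTop, hx'⟩

theorem tendsto_integral_of_dominated_of_forall_subseq {E : Type*} [NormedAddCommGroup E]
    [NormedSpace ℝ E] {G : ℕ → α → E} {g : α → E} (bound : α → ℝ)
    (hG : ∀ k, AEStronglyMeasurable (G k) μ) (h_int : Integrable bound μ)
    (h_bound : ∀ k, ∀ᵐ x ∂μ, ‖G k x‖ ≤ bound x)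
    (h_sub : ∀ ns : ℕ → ℕ, Tendsto ns atTop atTop →
      ∃ ms : ℕ → ℕ, ∀ᵐ x ∂μ, Tendsto (fun i => G (ns (ms i)) x) atTop (𝓝 (g x))) :
    Tendsto (fun k => ∫ x, G k x ∂μ) atTop (𝓝 (∫ x, g x ∂μ)) := by
  refine tendsto_of_subseq_tendsto fun ns hns => ?_
  obtain ⟨ms, hms⟩ := h_sub ns hns
  exact ⟨ms, tendsto_integral_of_dominated_convergence bound (fun i => hG _) h_int
    (fun i => h_bound _) hms⟩

end MeasureTheory

section SumOfSquares

variable {ι : Type*} [Fintype ι]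

theorem continuous_sum_sq : Continuous fun w : ι → ℝ => ∑ i, w i ^ 2 :=
  continuous_finsetSum _ fun i _ => (continuous_apply i).pow 2

theorem sum_sq_sub_le (a b : ι → ℝ) :
    ∑ i, (a i - b i) ^ 2 ≤ 2 * ∑ i, a i ^ 2 + 2 * ∑ i, b i ^ 2 := by
  rw [Finset.mul_sum, Finset.mul_sum, ← Finset.sum_add_distrib]
  exact Finset.sum_le_sum fun i _ => by nlinarith [sq_nonneg (a i + b i)]

theorem sum_sq_transpose_mulVec [DecidableEq ι] {A : Matrix ι ι ℝ} (hA : Aᵀ * A = 1)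
    (v : ι → ℝ) : ∑ i, (Aᵀ *ᵥ v) i ^ 2 = ∑ i, v i ^ 2 := by
  simp only [sq]
  change (Aᵀ *ᵥ v) ⬝ᵥ (Aᵀ *ᵥ v) = v ⬝ᵥ v
  rw [dotProduct_mulVec, vecMul_transpose, mulVec_mulVec, mul_eq_one_comm.mp hA, one_mulVec]

theorem tendsto_of_sum_sq_sub_tendsto_zero {β : Type*} {l : Filter β} {u : β → ι → ℝ}
    {v : ι → ℝ} (h : Tendsto (fun m => ∑ i, (u m i - v i) ^ 2) l (𝓝 0)) :
    Tendsto u l (𝓝 v) := by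
  refine tendsto_pi_nhds.2 fun i => ?_
  have hsq : Tendsto (fun m => (u m i - v i) ^ 2) l (𝓝 0) :=
    squeeze_zero (fun _ => sq_nonneg _)
      (fun m => Finset.single_le_sum (f := fun j => (u m j - v j) ^ 2)
        (fun _ _ => sq_nonneg _) (Finset.mem_univ i)) h
  have habs : Tendsto (fun m => |u m i - v i|) l (𝓝 0) := by
    simpa [Real.sqrt_sq_eq_abs] using hsq.sqrt
  simpa using ((tendsto_zero_iff_abs_tendsto_zero _).2 habs).add_const (v i)

end SumOfSquares

theorem frobSq3_nonneg (A : M3) : 0 ≤ frobSq3 A :=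
  Finset.sum_nonneg fun _ _ => Finset.sum_nonneg fun _ _ => sq_nonneg _

theorem measurable_frobSq3 : Measurable frobSq3 := by
  unfold frobSq3
  fun_prop

theorem tendsto_of_frobSq3_sub_tendsto_zero {β : Type*} {l : Filter β} {A : β → M3} {B : M3}
    (h : Tendsto (fun m => frobSq3 (A m - B)) l (𝓝 0)) : Tendsto A l (𝓝 B) := by
  refine tendsto_pi_nhds.2 fun i => tendsto_of_sum_sq_sub_tendsto_zero ?_
  refine squeeze_zero (fun _ => Finset.sum_nonneg fun _ _ => sq_nonneg _) (fun m => ?_) h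
  exact Finset.single_le_sum (f := fun i => ∑ j, ((A m - B) i j) ^ 2)
    (fun _ _ => Finset.sum_nonneg fun _ _ => sq_nonneg _) (Finset.mem_univ i)

theorem continuous_transpose_mulVec {m n : Type*} [Fintype m] :
    Continuous fun p : Matrix m n ℝ × (m → ℝ) => p.1ᵀ *ᵥ p.2 :=
  continuous_fst.matrix_transpose.matrix_mulVec continuous_snd

theorem Measurable.transpose_mulVec {α : Type*} [MeasurableSpace α] {A : α → M3}
    {v : α → Fin 3 → ℝ} (hA : Measurable A) (hv : Measurable v) :
    Measurable fun x => (A x)ᵀ *ᵥ v x :=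
  continuous_transpose_mulVec.measurable.comp (hA.prodMk hv)

theorem measurable_normalize3 : Measurable normalize3 := by
  unfold normalize3
  fun_prop

theorem sum_sq_normalize3_le_one (v : Fin 3 → ℝ) : ∑ i, normalize3 v i ^ 2 ≤ 1 := by
  have hs : 0 ≤ ∑ i, v i ^ 2 := Finset.sum_nonneg fun _ _ => sq_nonneg _
  have : ∑ i, normalize3 v i ^ 2 = (Real.sqrt (∑ i, v i ^ 2))⁻¹ ^ 2 * ∑ i, v i ^ 2 := by
    simp [normalize3, Finset.mul_sum, mul_pow]
  rw [this, inv_pow, Real.sq_sqrt hs]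
  exact inv_mul_le_one_of_le₀ le_rfl hs

theorem sum_sq_normalize3_sub_le_four (v : Fin 3 → ℝ) {u : Fin 3 → ℝ}
    (hu : ∑ i, u i ^ 2 = 1) : ∑ i, ((normalize3 v - u) i) ^ 2 ≤ 4 := by
  have := sum_sq_sub_le (normalize3 v) u
  simp only [Pi.sub_apply]
  linarith [sum_sq_normalize3_le_one v]

theorem normalize3_of_sum_sq_eq_one {v : Fin 3 → ℝ} (hv : ∑ i, v i ^ 2 = 1) :
    normalize3 v = v := by
  simp [normalize3, hv]

theorem continuousAt_normalize3 {v : Fin 3 → ℝ} (hv : ∑ i, v i ^ 2 ≠ 0) :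
    ContinuousAt normalize3 v := by
  have hs : Real.sqrt (∑ i, v i ^ 2) ≠ 0 :=
    (Real.sqrt_pos.2 ((Finset.sum_nonneg fun _ _ => sq_nonneg _).lt_of_ne' hv)).ne'
  exact (continuous_sum_sq.sqrt.continuousAt.inv₀ hs).smul continuousAt_id

theorem tendsto_normalize3_transpose_mulVec {β : Type*} {l : Filter β} [l.NeBot]
    {A : β → M3} {B : M3} {v : β → Fin 3 → ℝ} {w : Fin 3 → ℝ} (hA : Tendsto A l (𝓝 B))
    (hB : Bᵀ * B = 1) (hv : Tendsto v l (𝓝 w)) (hv_unit : ∀ m, ∑ i, v m i ^ 2 = 1) :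
    Tendsto (fun m => normalize3 ((A m)ᵀ *ᵥ v m)) l (𝓝 (Bᵀ *ᵥ w)) := by
  have hw : ∑ i, w i ^ 2 = 1 :=
    tendsto_nhds_unique ((continuous_sum_sq.tendsto w).comp hv)
      (by simp only [Function.comp_def, hv_unit, tendsto_const_nhds])
  have hBw : ∑ i, (Bᵀ *ᵥ w) i ^ 2 = 1 := (sum_sq_transpose_mulVec hB w).trans hw
  have hAv := (continuous_transpose_mulVec.tendsto (B, w)).comp (hA.prodMk_nhds hv)
  have := (continuousAt_normalize3 (by rw [hBw]; exact one_ne_zero)).tendsto.comp hAv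
  rwa [normalize3_of_sum_sq_eq_one hBw] at this

theorem statement14_general (Ω : Set (Fin 3 → ℝ))
    (ρ : (Fin 3 → ℝ) → ℝ) (hρint : Integrable ρ (volume.restrict Ω))
    (n0 : (Fin 3 → ℝ) → (Fin 3 → ℝ)) (hn0meas : Measurable n0)
    (hn0unit : ∀ᵐ x ∂(volume.restrict Ω), ∑ i, (n0 x i) ^ 2 = 1)
    (F : ℕ → (Fin 3 → ℝ) → M3) (hFmeas : ∀ k, Measurable (F k))
    (R : (Fin 3 → ℝ) → M3) (hRmeas : Measurable R)
    (hSO : ∀ᵐ x ∂(volume.restrict Ω), (R x)ᵀ * R x = 1 ∧ (R x).det = 1)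
    (hFconv : Tendsto (fun k => ∫⁻ x in Ω, ENNReal.ofReal (frobSq3 (F k x - R x)))
      atTop (𝓝 0))
    (n : ℕ → (Fin 3 → ℝ) → (Fin 3 → ℝ)) (hnmeas : ∀ k, Measurable (n k))
    (hnunit : ∀ k, ∀ᵐ x ∂(volume.restrict Ω), ∑ i, (n k x i) ^ 2 = 1)
    (nl : (Fin 3 → ℝ) → (Fin 3 → ℝ)) (hnlmeas : Measurable nl)
    (hnconv : Tendsto
      (fun k => ∫⁻ x in Ω, ENNReal.ofReal (∑ i, ((n k x - nl x) i) ^ 2)) atTop (𝓝 0)) :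
    Tendsto
      (fun k => ∫ x in Ω,
        (∑ i, ((normalize3 (Matrix.mulVec (F k x)ᵀ (n k x)) - n0 x) i) ^ 2) * ρ x)
      atTop
      (𝓝 (∫ x in Ω, (∑ i, ((Matrix.mulVec (R x)ᵀ (nl x) - n0 x) i) ^ 2) * ρ x)) := by
  have hF : TendstoInMeasure (volume.restrict Ω) (fun k x => frobSq3 (F k x - R x)) atTop 0 :=
    tendstoInMeasure_zero_of_tendsto_lintegral (fun _ _ => frobSq3_nonneg _)
      (fun k => (measurable_frobSq3.comp ((hFmeas k).sub hRmeas)).aestronglyMeasurable) hFconv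
  have hn : TendstoInMeasure (volume.restrict Ω)
      (fun k x => ∑ i, ((n k x - nl x) i) ^ 2) atTop 0 :=
    tendstoInMeasure_zero_of_tendsto_lintegral
      (fun _ _ => Finset.sum_nonneg fun _ _ => sq_nonneg _)
      (fun k => (continuous_sum_sq.measurable.comp
        ((hnmeas k).sub hnlmeas)).aestronglyMeasurable) hnconv
  refine tendsto_integral_of_dominated_of_forall_subseq (fun x => 4 * ‖ρ x‖) (fun k => ?_)
    (hρint.norm.const_mul 4) (fun k => ?_) fun ns hns => ?_
  · exact (continuous_sum_sq.measurable.comp ((measurable_normalize3.comp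
      ((hFmeas k).transpose_mulVec (hnmeas k))).sub hn0meas)).aestronglyMeasurable.mul hρint.1
  · filter_upwards [hn0unit] with x hx
    rw [norm_mul, Real.norm_of_nonneg (Finset.sum_nonneg fun _ _ => sq_nonneg _)]
    gcongr
    exact sum_sq_normalize3_sub_le_four _ hx
  · obtain ⟨ms, -, hms⟩ :=
      (hF.comp_tendsto hns).exists_seq_tendsto_ae_prod (hn.comp_tendsto hns)
    refine ⟨ms, ?_⟩
    filter_upwards [hms, hSO, ae_all_iff.2 hnunit] with x ⟨hFx, hnx⟩ hRx hnx_unit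
    have hw := tendsto_normalize3_transpose_mulVec (tendsto_of_frobSq3_sub_tendsto_zero hFx)
      hRx.1 (tendsto_of_sum_sq_sub_tendsto_zero hnx) fun _ => hnx_unit _
    exact (((continuous_sum_sq.comp (continuous_sub_right (n0 x))).mul
      continuous_const).tendsto _).comp hw

/-- continuity of the weak-anchoring term: if `F_k → R` in `L²(Ω)` with
`det F_k > 0` a.e. and `R ∈ SO(3)` a.e., and `n_k → n` in `L²(Ω)` with `|n_k| = 1` a.e.,
then `∫_Ω |F_kᵀn_k/|F_kᵀn_k| − n̂₀|² ρ → ∫_Ω |Rᵀn − n̂₀|² ρ`. -/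
theorem statement14 (Ω : Set (Fin 3 → ℝ)) (hΩ : MeasurableSet Ω)
    (hfin : volume Ω < ⊤)
    (ρ : (Fin 3 → ℝ) → ℝ) (hρint : Integrable ρ (volume.restrict Ω))
    (hρpos : ∀ᵐ x ∂(volume.restrict Ω), 0 ≤ ρ x)
    (n0 : (Fin 3 → ℝ) → (Fin 3 → ℝ)) (hn0meas : Measurable n0)
    (hn0unit : ∀ᵐ x ∂(volume.restrict Ω), ∑ i, (n0 x i) ^ 2 = 1)
    (F : ℕ → (Fin 3 → ℝ) → M3) (hFmeas : ∀ k, Measurable (F k))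
    (hFdet : ∀ k, ∀ᵐ x ∂(volume.restrict Ω), 0 < (F k x).det)
    (R : (Fin 3 → ℝ) → M3) (hRmeas : Measurable R)
    (hSO : ∀ᵐ x ∂(volume.restrict Ω), (R x)ᵀ * R x = 1 ∧ (R x).det = 1)
    (hFconv : Tendsto (fun k => ∫⁻ x in Ω, ENNReal.ofReal (frobSq3 (F k x - R x)))
      atTop (𝓝 0))
    (n : ℕ → (Fin 3 → ℝ) → (Fin 3 → ℝ)) (hnmeas : ∀ k, Measurable (n k))
    (hnunit : ∀ k, ∀ᵐ x ∂(volume.restrict Ω), ∑ i, (n k x i) ^ 2 = 1)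
    (nl : (Fin 3 → ℝ) → (Fin 3 → ℝ)) (hnlmeas : Measurable nl)
    (hnconv : Tendsto
      (fun k => ∫⁻ x in Ω, ENNReal.ofReal (∑ i, ((n k x - nl x) i) ^ 2)) atTop (𝓝 0)) :
    Tendsto
      (fun k => ∫ x in Ω,
        (∑ i, ((normalize3 (Matrix.mulVec (F k x)ᵀ (n k x)) - n0 x) i) ^ 2) * ρ x)
      atTop
      (𝓝 (∫ x in Ω, (∑ i, ((Matrix.mulVec (R x)ᵀ (nl x) - n0 x) i) ^ 2) * ρ x)) :=
  statement14_general Ω ρ hρint n0 hn0meas hn0unit F hFmeas R hRmeas hSO hFconv n hnmeas hnunit nl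
    hnlmeas hnconv
end
end
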